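/- For n ≥ 1 and 0 ≤ i ≤ n−1, the isoplex ∇̄_i[n] = W_i(Δ[n−1]) is isomorphic to the nerve of the category [n]_i obtained from the linearly ordered category [n] = {0 ≤ 1 ≤ … ≤ n} by freely inverting the morphism i → i+1; equivalently, [n]_i is the pushout in the category of small categories of [n] ← [1] → 𝕀, where [1] → [n] picks out the morphism i → i+1 and [1] → 𝕀 is the inclusion into the free-living isomorphism. -/

import Mathlib

open CategoryTheory Simplicial Opposite Limits

namespace Paper

/-! ## The simplicial set `J`, nerve of the free-living isomorphism -/

/-- The simplicial set `J`, the nerve of the free-living isomorphism `𝕀`: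
its `n`-simplices are the tuples `{0,1}^(n+1)` (recorded as `Bool`-valued functions,
`false` being the vertex `0` and `true` the vertex `1`), with all simplicial
operators acting by reindexing. -/
def J : SSet.{0} where
  obj m := Fin (m.unop.len + 1) → Bool
  map f := TypeCat.ofHom fun a => a ∘ f.unop.toOrderHom
  map_id _ := rfl
  map_comp _ _ := rfl

/-- The two vertices `0, 1 : Δ[0] ⟶ J` of `J`; `ptJ false` is the vertex `0` and
`ptJ true` is the vertex `1`. -/
def ptJ (b : Bool) : Δ[0] ⟶ J where
  app _ := TypeCat.ofHom fun _ => fun _ => b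
  naturality _ _ _ := rfl

/-- The boundary `∂J = {0} ∪ {1}` of `J` (two discrete points). -/
def bJ : SSet.{0} where
  obj _ := Bool
  map _ := TypeCat.ofHom fun b => b
  map_id _ := rfl
  map_comp _ _ := rfl

/-- The inclusion `∂J ↪ J`. -/
def bJIncl : bJ ⟶ J where
  app _ := TypeCat.ofHom fun b => fun _ => b
  naturality _ _ _ := rfl

/-! ## Binary products and pushout-products -/

/-- The (pointwise) product of two simplicial sets. -/
def sprod (X Y : SSet.{0}) : SSet.{0} where
  obj m := X.obj m × Y.obj m
  map f := TypeCat.ofHom fun p => (X.map f p.1, Y.map f p.2)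
  map_id m := by
    ext p
    · exact FunctorToTypes.map_id_apply X p.1
    · exact FunctorToTypes.map_id_apply Y p.2
  map_comp f g := by
    ext p
    · exact FunctorToTypes.map_comp_apply X f g p.1
    · exact FunctorToTypes.map_comp_apply Y f g p.2

/-- The product of two morphisms of simplicial sets. -/
def sprodMap {X X' Y Y' : SSet.{0}} (f : X ⟶ X') (g : Y ⟶ Y') : sprod X Y ⟶ sprod X' Y' where
  app m := TypeCat.ofHom fun p => (f.app m p.1, g.app m p.2)
  naturality m m' φ := by
    ext p
    apply Prod.ext
    · exact NatTrans.naturality_apply f φ p.1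
    · exact NatTrans.naturality_apply g φ p.2

/-- The pushout-product `f □ g : (A × Z) ∪ (B × W) ⟶ B × Z` of `f : A ⟶ B` and
`g : W ⟶ Z`, the domain being presented as the pushout `(A × Z) ∪_{A × W} (B × W)`. -/
noncomputable def pp {A B W Z : SSet.{0}} (f : A ⟶ B) (g : W ⟶ Z) :
    pushout (sprodMap (𝟙 A) g) (sprodMap f (𝟙 W)) ⟶ sprod B Z :=
  pushout.desc (sprodMap f (𝟙 Z)) (sprodMap (𝟙 B) g) rfl

/-! ## Saturated classes of morphisms -/

/-- A class of morphisms is stable under retracts if, whenever `f` is a retract of `g`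
in the arrow category, membership of `g` implies membership of `f`. -/
def StableUnderRetracts (T : MorphismProperty SSet.{0}) : Prop :=
  ∀ ⦃X Y X' Y' : SSet.{0}⦄ (f : X ⟶ Y) (g : X' ⟶ Y')
    (i : Arrow.mk f ⟶ Arrow.mk g) (r : Arrow.mk g ⟶ Arrow.mk f),
    i ≫ r = 𝟙 _ → T g → T f

/-- The inclusion functor `Set.Iio i ⥤ ι`. -/
def iioFunctor {ι : Type} [Preorder ι] (i : ι) : Set.Iio i ⥤ ι :=
  Monotone.functor (f := Subtype.val) (fun _ _ h => h)

/-- The cocone on the restriction of `F : ι ⥤ SSet` to `Set.Iio i` with apex `F.obj i`. -/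
def restrictionCocone {ι : Type} [Preorder ι] (F : ι ⥤ SSet.{0}) (i : ι) :
    Cocone (iioFunctor i ⋙ F) where
  pt := F.obj i
  ι :=
    { app := fun j => F.map (homOfLE j.2.le)
      naturality := fun j k h => by
        dsimp [iioFunctor]
        rw [← F.map_comp, Category.comp_id]
        congr 1 }

/-- A class of morphisms is stable under transfinite composition if, for every
well-ordered type `ι` and every functor `F : ι ⥤ SSet` which is continuous at limit
stages and whose successor maps `F.obj i ⟶ F.obj (i+1)` all belong to the class, and
every colimit cocone `c` on `F`, the transfinite composite `F.obj ⊥ ⟶ c.pt` belongs to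
the class. -/
def StableUnderTransfiniteComposition (T : MorphismProperty SSet.{0}) : Prop :=
  ∀ (ι : Type) [LinearOrder ι] [SuccOrder ι] [OrderBot ι] [WellFoundedLT ι]
    (F : ι ⥤ SSet.{0}),
    (∀ i : ι, ¬IsMax i → T (F.map (homOfLE (Order.le_succ i)))) →
    (∀ i : ι, Order.IsSuccLimit i → Nonempty (IsColimit (restrictionCocone F i))) →
    ∀ (c : Cocone F), IsColimit c → T (c.ι.app ⊥)

/-- A class of morphisms of simplicial sets is saturated if it is closed under
isomorphisms, pushouts, transfinite compositions, and retracts. -/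
structure IsSaturated (T : MorphismProperty SSet.{0}) : Prop where
  respectsIso : T.RespectsIso
  stableUnderCobaseChange : T.IsStableUnderCobaseChange
  stableUnderRetracts : StableUnderRetracts T
  stableUnderTransfiniteComposition : StableUnderTransfiniteComposition T

/-- The saturated closure of a class of morphisms: the smallest saturated class
containing it. -/
def satClosure (S : MorphismProperty SSet.{0}) : MorphismProperty SSet.{0} :=
  fun _ _ f => ∀ T : MorphismProperty SSet.{0}, IsSaturated T → S ≤ T → T f

/-! ## Subcomplexes -/

/-- A subcomplex of a simplicial set. -/
structure Sub (X : SSet.{0}) where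
  carrier : ∀ m, Set (X.obj m)
  map_mem : ∀ ⦃m m' : SimplexCategoryᵒᵖ⦄ (f : m ⟶ m') ⦃σ : X.obj m⦄,
    σ ∈ carrier m → X.map f σ ∈ carrier m'

/-- The simplicial set underlying a subcomplex. -/
def Sub.toSSet {X : SSet.{0}} (S : Sub X) : SSet.{0} where
  obj m := S.carrier m
  map f := TypeCat.ofHom fun σ => ⟨X.map f σ.1, S.map_mem f σ.2⟩
  map_id m := by
    ext σ
    exact FunctorToTypes.map_id_apply X σ.1
  map_comp f g := by
    ext σ
    exact FunctorToTypes.map_comp_apply X f g σ.1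

/-- The inclusion of a subcomplex. -/
def Sub.ι {X : SSet.{0}} (S : Sub X) : S.toSSet ⟶ X where
  app _ := TypeCat.ofHom fun σ => σ.1
  naturality _ _ _ := rfl

/-- Containment of subcomplexes. -/
def Sub.Le {X : SSet.{0}} (S T : Sub X) : Prop := ∀ m, S.carrier m ⊆ T.carrier m

/-- The inclusion map associated to a containment of subcomplexes. -/
def Sub.homOfLe {X : SSet.{0}} {S T : Sub X} (h : S.Le T) : S.toSSet ⟶ T.toSSet where
  app m := TypeCat.ofHom fun σ => ⟨σ.1, h m σ.2⟩
  naturality _ _ _ := rfl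

/-- The union of two subcomplexes. -/
def Sub.union {X : SSet.{0}} (S T : Sub X) : Sub X where
  carrier m := S.carrier m ∪ T.carrier m
  map_mem _ _ f _ h := h.imp (fun hs => S.map_mem f hs) (fun ht => T.map_mem f ht)

/-- The intersection of two subcomplexes. -/
def Sub.inter {X : SSet.{0}} (S T : Sub X) : Sub X where
  carrier m := S.carrier m ∩ T.carrier m
  map_mem _ _ f _ h := ⟨S.map_mem f h.1, T.map_mem f h.2⟩

/-- A subcomplex `S` of `X`, viewed as a subcomplex of (the simplicial set underlying)
another subcomplex `T` of `X`. -/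
def Sub.restrict {X : SSet.{0}} (T S : Sub X) : Sub T.toSSet where
  carrier m := {σ | σ.1 ∈ S.carrier m}
  map_mem _ _ f _ h := S.map_mem f h

/-- The (dimension zero) object of `SimplexCategoryᵒᵖ` indexing vertices. -/
abbrev V0 : SimplexCategoryᵒᵖ := Opposite.op (SimplexCategory.mk 0)

/-- The full subcomplex of `X` on a set `ν` of vertices: the simplices all of whose
vertices lie in `ν`. -/
def fullSub (X : SSet.{0}) (ν : Set (X.obj V0)) : Sub X where
  carrier m := {σ | ∀ g : SimplexCategory.mk 0 ⟶ m.unop, X.map g.op σ ∈ ν}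
  map_mem := by
    intro m m' f σ hσ g
    rw [← FunctorToTypes.map_comp_apply]
    exact hσ (g ≫ f.unop)

/-! ## Widenings and widened inclusions -/

/-- The widening `W_ν(X)` of `X` at a set `ν` of vertices: the full subcomplex of
`J × X` on the vertex set `({0} × X₀) ∪ ({1} × ν)`. -/
def wideSub (X : SSet.{0}) (ν : Set (X.obj V0)) : Sub (sprod J X) :=
  fullSub (sprod J X) {p | p.1 0 = true → p.2 ∈ ν}

/-- The subcomplex `{0} × X` of `J × X` (the full subcomplex on the vertices
`{0} × X₀`). -/
def zeroSlice (X : SSet.{0}) : Sub (sprod J X) :=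
  fullSub (sprod J X) {p | p.1 0 = false}

/-- For `A` a subcomplex of `Y`, the subcomplex `J × A` of `J × Y`. -/
def Sub.prodJ {Y : SSet.{0}} (A : Sub Y) : Sub (sprod J Y) where
  carrier m := {p | p.2 ∈ A.carrier m}
  map_mem _ _ f _ h := A.map_mem f h

/-- Given a subcomplex (inclusion) `A = X ⊆ Y` and a set `ν` of vertices of `Y`, the
subcomplex `({0} × Y) ∪ W_{ν ∩ X₀}(X)` of `J × Y`: the domain of the inclusion
`X ↪ Y` widened at `ν`. -/
def widenedSub (Y : SSet.{0}) (A : Sub Y) (ν : Set (Y.obj V0)) : Sub (sprod J Y) :=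
  (zeroSlice Y).union ((wideSub Y (ν ∩ A.carrier V0)).inter A.prodJ)

lemma zeroSlice_le_wideSub (Y : SSet.{0}) (ν : Set (Y.obj V0)) :
    (zeroSlice Y).Le (wideSub Y ν) := by
  intro m σ hσ g h
  exact absurd (hσ g) (by simp [h])

lemma wideSub_mono (Y : SSet.{0}) {ν ν' : Set (Y.obj V0)} (h : ν ⊆ ν') :
    (wideSub Y ν).Le (wideSub Y ν') :=
  fun _ σ hσ g ht => h (hσ g ht)

lemma widenedSub_le (Y : SSet.{0}) (A : Sub Y) (ν : Set (Y.obj V0)) :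
    (widenedSub Y A ν).Le (wideSub Y ν) := by
  refine fun m σ hσ => Or.elim hσ (fun h => ?_) (fun h => ?_)
  · exact zeroSlice_le_wideSub Y ν m h
  · exact wideSub_mono Y Set.inter_subset_left m h.1

/-- The inclusion `X ↪ Y` widened at `ν`: the inclusion
`({0} × Y) ∪ W_{ν ∩ X₀}(X) ↪ W_ν(Y)`. -/
def widenedIncl (Y : SSet.{0}) (A : Sub Y) (ν : Set (Y.obj V0)) :
    (widenedSub Y A ν).toSSet ⟶ (wideSub Y ν).toSSet :=
  Sub.homOfLe (widenedSub_le Y A ν)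

/-- `Wide`: the class of all widened inclusions. -/
def Wide : MorphismProperty SSet.{0} := fun _ _ h =>
  ∃ (Y : SSet.{0}) (A : Sub Y) (ν : Set (Y.obj V0)),
    Arrow.mk h = Arrow.mk (widenedIncl Y A ν)

/-- `Wide^(1)`: the class of inclusions widened at a single vertex. -/
def Wide1 : MorphismProperty SSet.{0} := fun _ _ h =>
  ∃ (Y : SSet.{0}) (A : Sub Y) (v : Y.obj V0),
    Arrow.mk h = Arrow.mk (widenedIncl Y A {v})

/-! ## Narrow vertices -/

/-- A vertex `v` of `Y` is narrow if every simplex of `Y` has at most one vertex equal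
to `v`. -/
def Narrow (Y : SSet.{0}) (v : Y.obj V0) : Prop :=
  ∀ ⦃m : SimplexCategoryᵒᵖ⦄ (σ : Y.obj m) (g g' : SimplexCategory.mk 0 ⟶ m.unop),
    Y.map g.op σ = v → Y.map g'.op σ = v → g = g'

/-- `Wide_nar`: the class of inclusions widened at a narrow set of vertices. -/
def WideNar : MorphismProperty SSet.{0} := fun _ _ h =>
  ∃ (Y : SSet.{0}) (A : Sub Y) (ν : Set (Y.obj V0)),
    (∀ v ∈ ν, Narrow Y v) ∧ Arrow.mk h = Arrow.mk (widenedIncl Y A ν)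

/-- `Wide_nar^(1)`: the class of inclusions widened at a single narrow vertex. -/
def WideNar1 : MorphismProperty SSet.{0} := fun _ _ h =>
  ∃ (Y : SSet.{0}) (A : Sub Y) (v : Y.obj V0),
    Narrow Y v ∧ Arrow.mk h = Arrow.mk (widenedIncl Y A {v})

/-! ## Standard simplices, boundaries, skeleta, iso-horns -/

/-- The unique map to the terminal simplicial set `Δ[0]`. -/
def toPt (X : SSet.{0}) : X ⟶ Δ[0] where
  app m := TypeCat.ofHom fun _ => SSet.stdSimplex.const 0 0 m
  naturality m m' f := by
    ext x
    apply SSet.stdSimplex.objEquiv.injective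
    apply SimplexCategory.Hom.ext
    apply OrderHom.ext
    funext j
    exact Subsingleton.elim (α := Fin 1) _ _

/-- The `i`-th vertex of the standard simplex `Δ[n]`. -/
def vrt (n : ℕ) (i : Fin (n + 1)) : Δ[n].obj V0 :=
  SSet.stdSimplex.const n i V0

/-- The boundary `∂Δ[n]`, as a subcomplex of `Δ[n]`: the simplices which are not
surjective as monotone maps. -/
def bSub (n : ℕ) : Sub Δ[n] where
  carrier m := {σ | ¬Function.Surjective (SSet.stdSimplex.asOrderHom σ)}
  map_mem _ _ f σ hσ h := hσ (Function.Surjective.of_comp h)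

/-- The `k`-skeleton of `Y`, as a subcomplex: the simplices which factor through some
simplex of dimension at most `k`. -/
def skSub (Y : SSet.{0}) (k : ℕ) : Sub Y where
  carrier m := {σ | ∃ (j : ℕ) (_ : j ≤ k) (f : m.unop ⟶ SimplexCategory.mk j)
    (τ : Y.obj (Opposite.op (SimplexCategory.mk j))), Y.map f.op τ = σ}
  map_mem := by
    rintro m m' φ σ ⟨j, hj, f, τ, rfl⟩
    exact ⟨j, hj, φ.unop ≫ f, τ, by rw [← FunctorToTypes.map_comp_apply]; rfl⟩

/-- A `k`-simplex is nondegenerate if it admits no factorization through a simplex of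
strictly smaller dimension. -/
def Nondegenerate (Y : SSet.{0}) {k : ℕ} (σ : Y.obj (Opposite.op (SimplexCategory.mk k))) :
    Prop :=
  ∀ (j : ℕ) (f : SimplexCategory.mk k ⟶ SimplexCategory.mk j)
    (τ : Y.obj (Opposite.op (SimplexCategory.mk j))), Y.map f.op τ = σ → k ≤ j

/-- The iso-horn inclusion `𝕍_i[m+1] ↪ ∇̄_i[m+1]`: the boundary inclusion
`∂Δ[m] ↪ Δ[m]` widened at the single vertex `i`, i.e. the inclusion
`({0} × Δ[m]) ∪ W_i(∂Δ[m]) ↪ W_i(Δ[m])` of the iso-horn into the isoplex. -/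
def isoHornIncl (m : ℕ) (i : Fin (m + 1)) :
    (widenedSub Δ[m] (bSub m) {vrt m i}).toSSet ⟶ (wideSub Δ[m] {vrt m i}).toSSet :=
  widenedIncl Δ[m] (bSub m) {vrt m i}

/-- `IsoHorn`: the class of all iso-horn inclusions. -/
def IsoHorn : MorphismProperty SSet.{0} := fun _ _ h =>
  ∃ (m : ℕ) (i : Fin (m + 1)), Arrow.mk h = Arrow.mk (isoHornIncl m i)

/-! ## The classes `({0} ↪ J) □ Bdry` and `({0} ↪ J) □ Mono` -/

/-- The class `({0} ↪ J) □ Bdry` of pushout-products of the vertex `0 : Δ[0] ⟶ J`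
with the boundary inclusions `∂Δ[n] ↪ Δ[n]`. -/
def ppJ0Bdry : MorphismProperty SSet.{0} := fun _ _ h =>
  ∃ n : ℕ, Arrow.mk h = Arrow.mk (pp (ptJ false) (SSet.boundary n).ι)

/-- The class `({0} ↪ J) □ Mono` of pushout-products of the vertex `0 : Δ[0] ⟶ J`
with all monomorphisms of simplicial sets. -/
def ppJ0Mono : MorphismProperty SSet.{0} := fun _ _ h =>
  ∃ (W Z : SSet.{0}) (g : W ⟶ Z), Mono g ∧ Arrow.mk h = Arrow.mk (pp (ptJ false) g)


/-- The free-living isomorphism `𝕀`: the groupoid with two objects `0, 1` and exactly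
one morphism in each hom-set. -/
def FreeIso : Type := Bool

instance : Groupoid FreeIso where
  Hom _ _ := PUnit
  id _ := PUnit.unit
  comp _ _ := PUnit.unit
  inv _ := PUnit.unit

/-- The functor `[1] ⟶ [n+1]` (i.e. `Fin 2 ⥤ Fin (n+2)`) picking out the morphism
`i → i+1`. -/
def edgeFunctor (n : ℕ) (i : Fin (n + 1)) : Fin 2 ⥤ Fin (n + 2) :=
  Monotone.functor (f := fun j => if j = 0 then i.castSucc else i.succ)
    (by
      intro a b hab
      by_cases ha : a = 0
      · by_cases hb : b = 0
        · simp [ha, hb]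
        · simpa [ha, hb] using (Fin.castSucc_le_succ i)
      · have hb : b ≠ 0 := fun h => ha (le_antisymm (h ▸ hab) (Fin.zero_le a))
        simp [ha, hb])

/-- The inclusion `[1] ⟶ 𝕀` of the free-living arrow into the free-living isomorphism,
sending `0 ↦ 0` and `1 ↦ 1`. -/
def inclFunctor : Fin 2 ⥤ FreeIso where
  obj j := show Bool from decide (j = 1)
  map _ := PUnit.unit
  map_id _ := rfl
  map_comp _ _ := rfl

/-- `edgeFunctor`, as a morphism in `Cat`. -/
def edgeHom (n : ℕ) (i : Fin (n + 1)) : Cat.of (Fin 2) ⟶ Cat.of (Fin (n + 2)) :=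
  (edgeFunctor n i).toCatHom

/-- `inclFunctor`, as a morphism in `Cat`. -/
def inclHom : Cat.of (Fin 2) ⟶ Cat.of FreeIso :=
  inclFunctor.toCatHom

/-! `[m+1]_i` is realised as `Fin (m+2)` with the preorder pulled back along the collapse
`Fin.predAbove i : [m+1] → [m]`, which identifies `i` with `i+1`. Every arrow of this preorder is
a composite of images of arrows of `[m+1]` and of the inverse of the image of `i → i+1`, so a
functor out of it is determined by its restriction to `[m+1]`; conversely a functor
`F : [m+1] ⥤ D` inverting `i → i+1` extends along the retraction `s` onto the copy of `[m]`
avoiding `i+1`, corrected by the isomorphisms `F (s a) ≅ F a`. This is the pushout property.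

On the simplicial side, the isoplex and the nerve of a preorder are both determined by their
vertices: the vertices `(b, k)` of `W_i(Δ[m])` (with `b = 1 → k = i`) correspond to the objects
of `[m+1]_i`, and a family of vertices spans a simplex on either side exactly when its image in
`[m]` is monotone. -/

lemma map_comp_map_eq_of_isThin {C D : Type*} [Category C] [Quiver.IsThin C] [Category D]
    (F : C ⥤ D) {a b b' c : C} (f : a ⟶ b) (g : b ⟶ c) (f' : a ⟶ b') (g' : b' ⟶ c) :
    F.map f ≫ F.map g = F.map f' ≫ F.map g' := by
  rw [← F.map_comp, ← F.map_comp, Subsingleton.elim (f ≫ g) (f' ≫ g')]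

namespace FreeIso

/- `(false : FreeIso)` would still have type `Bool`, whose order category would then be used for
`⟶`; these names give the objects of `𝕀` the type `FreeIso`. -/
abbrev zero : FreeIso := false

abbrev one : FreeIso := true

lemma eq_zero_or_eq_one (a : FreeIso) : a = zero ∨ a = one :=
  (Bool.eq_false_or_eq_true a).symm

def hom01 : zero ⟶ one := PUnit.unit

lemma ext_of_inclFunctor_comp {D : Type*} [Category D] {G₁ G₂ : FreeIso ⥤ D}
    (h : inclFunctor ⋙ G₁ = inclFunctor ⋙ G₂) : G₁ = G₂ := by
  have hobj (b : FreeIso) : G₁.obj b = G₂.obj b := by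
    obtain rfl | rfl := eq_zero_or_eq_one b
    · exact Functor.congr_obj h 0
    · exact Functor.congr_obj h 1
  have h01 : G₁.map hom01 = eqToHom (hobj _) ≫ G₂.map hom01 ≫ eqToHom (hobj _).symm :=
    Functor.congr_hom h (homOfLE (zero_le_one : (0 : Fin 2) ≤ 1))
  refine CategoryTheory.Functor.ext hobj fun a b f => ?_
  obtain rfl | rfl := eq_zero_or_eq_one a <;> obtain rfl | rfl := eq_zero_or_eq_one b
  · obtain rfl : f = 𝟙 zero := rfl
    simp
  · exact h01
  · obtain rfl : f = inv hom01 := rfl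
    simp [h01]
  · obtain rfl : f = 𝟙 one := rfl
    simp

end FreeIso

/-- The category `[m+1]_i`. -/
structure InvertedFin {m : ℕ} (i : Fin (m + 1)) where
  val : Fin (m + 2)

namespace InvertedFin

variable {m : ℕ} (i : Fin (m + 1))

instance : Preorder (InvertedFin i) :=
  Preorder.lift fun a : InvertedFin i => i.predAbove a.val

lemma le_iff {a b : InvertedFin i} : a ≤ b ↔ i.predAbove a.val ≤ i.predAbove b.val := Iff.rfl

def ι : Fin (m + 2) ⥤ InvertedFin i :=
  Monotone.functor (f := InvertedFin.mk) (Fin.predAbove_right_monotone i)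

@[simp]
lemma ι_obj (a : Fin (m + 2)) : (ι i).obj a = ⟨a⟩ := rfl

def ofFreeIso : FreeIso ⥤ InvertedFin i where
  obj b := ⟨cond b i.succ i.castSucc⟩
  map {a b} _ := homOfLE <| (le_iff i).2 <| by cases a <;> cases b <;> simp
  map_id _ := Subsingleton.elim _ _
  map_comp _ _ := Subsingleton.elim _ _

lemma edgeFunctor_comp_ι : edgeFunctor m i ⋙ ι i = inclFunctor ⋙ ofFreeIso i :=
  CategoryTheory.Functor.ext (fun j => by fin_cases j <;> rfl) fun _ _ _ => Subsingleton.elim _ _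

lemma succAbove_predAbove_le (a : Fin (m + 2)) : i.succ.succAbove (i.predAbove a) ≤ a := by
  obtain rfl | h := eq_or_ne a i.succ
  · simp [Fin.castSucc_le_succ]
  · rw [Fin.succ_succAbove_predAbove h]

def retraction : InvertedFin i ⥤ Fin (m + 2) :=
  Monotone.functor (f := fun a : InvertedFin i => i.succ.succAbove (i.predAbove a.val))
    fun _ _ h => (Fin.strictMono_succAbove _).monotone h

section Lift

variable {D : Type*} [Category D] (F : Fin (m + 2) ⥤ D)

lemma isIso_map_succAbove_predAbove_le (hF : IsIso (F.map (homOfLE i.castSucc_le_succ)))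
    (a : Fin (m + 2)) :
    IsIso (F.map (homOfLE (succAbove_predAbove_le i a))) := by
  obtain rfl | h := eq_or_ne a i.succ
  · suffices ∀ x (h : x ≤ i.succ), x = i.castSucc → IsIso (F.map (homOfLE h)) from
      this _ _ (by simp)
    rintro _ _ rfl
    exact hF
  · have := homOfLE_isIso_of_eq (succAbove_predAbove_le i a) (Fin.succ_succAbove_predAbove h)
    infer_instance

variable (hF : IsIso (F.map (homOfLE i.castSucc_le_succ)))

noncomputable def retractionIso (a : Fin (m + 2)) :
    F.obj (i.succ.succAbove (i.predAbove a)) ≅ F.obj a :=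
  @asIso _ _ _ _ _ (isIso_map_succAbove_predAbove_le i F hF a)

/-- The extension of `F` to `[m+1]_i`; `copyObj` makes `ι ⋙ lift F = F` hold on the nose. -/
noncomputable def lift : InvertedFin i ⥤ D :=
  (retraction i ⋙ F).copyObj (fun a => F.obj a.val) fun a => retractionIso i F hF a.val

lemma ι_comp_lift : ι i ⋙ lift i F hF = F := by
  refine CategoryTheory.Functor.ext (fun _ => rfl) fun a b f => ?_
  change _ = 𝟙 _ ≫ F.map f ≫ 𝟙 _
  rw [Category.id_comp, Category.comp_id]
  exact (Iso.inv_comp_eq _).2 (map_comp_map_eq_of_isThin F _ _ _ _)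

end Lift

lemma isIso_ι_comp_map_castSucc_le_succ {D : Type*} [Category D] (H : InvertedFin i ⥤ D) :
    IsIso ((ι i ⋙ H).map (homOfLE i.castSucc_le_succ)) :=
  have : IsIso ((ι i).map (homOfLE i.castSucc_le_succ)) :=
    (isIso_iff_of_thin _).2 ⟨homOfLE <| (le_iff i).2 <| by simp⟩
  Functor.map_isIso H _

lemma lift_ι_comp {D : Type*} [Category D] (H : InvertedFin i ⥤ D) :
    lift i (ι i ⋙ H) (isIso_ι_comp_map_castSucc_le_succ i H) = H := by
  refine CategoryTheory.Functor.ext (fun _ => rfl) fun a b f => ?_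
  change _ = 𝟙 _ ≫ H.map f ≫ 𝟙 _
  rw [Category.id_comp, Category.comp_id]
  exact (Iso.inv_comp_eq _).2 (map_comp_map_eq_of_isThin H _ _ _ _)

section UniversalProperty

variable {D : Type*} [Category D] {F : Fin (m + 2) ⥤ D} {G : FreeIso ⥤ D}

lemma isIso_map_of_edgeFunctor_comp_eq (w : edgeFunctor m i ⋙ F = inclFunctor ⋙ G) :
    IsIso (F.map (homOfLE i.castSucc_le_succ)) := by
  have edge := Functor.congr_hom w (homOfLE (zero_le_one : (0 : Fin 2) ≤ 1))
  have : IsIso ((edgeFunctor m i ⋙ F).map (homOfLE zero_le_one)) := by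
    rw [edge, Functor.comp_map]
    infer_instance
  exact this

lemma ofFreeIso_comp_lift (w : edgeFunctor m i ⋙ F = inclFunctor ⋙ G)
    (hF : IsIso (F.map (homOfLE i.castSucc_le_succ))) : ofFreeIso i ⋙ lift i F hF = G := by
  apply FreeIso.ext_of_inclFunctor_comp
  rw [← Functor.assoc, ← edgeFunctor_comp_ι, Functor.assoc, ι_comp_lift, w]

lemma eq_lift_of_ι_comp_eq (hF : IsIso (F.map (homOfLE i.castSucc_le_succ)))
    (H : InvertedFin i ⥤ D) (h : ι i ⋙ H = F) : H = lift i F hF := by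
  subst h
  exact (lift_ι_comp i H).symm

end UniversalProperty

lemma isPushout : IsPushout (edgeHom m i) inclHom (ι i).toCatHom (ofFreeIso i).toCatHom := by
  have square : edgeHom m i ≫ (ι i).toCatHom = inclHom ≫ (ofFreeIso i).toCatHom :=
    congrArg Functor.toCatHom (edgeFunctor_comp_ι i)
  have hinv (s : PushoutCocone (edgeHom m i) inclHom) :=
    isIso_map_of_edgeFunctor_comp_eq i (congrArg Cat.Hom.toFunctor s.condition)
  refine IsPushout.of_isColimit (PushoutCocone.IsColimit.mk square
    (fun s => (lift i s.inl.toFunctor (hinv s)).toCatHom) (fun s => ?_) (fun s => ?_)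
    (fun s H hl _ => ?_))
  · exact congrArg Functor.toCatHom (ι_comp_lift i _ (hinv s))
  · exact congrArg Functor.toCatHom
      (ofFreeIso_comp_lift i (congrArg Cat.Hom.toFunctor s.condition) (hinv s))
  · exact congrArg Functor.toCatHom
      (eq_lift_of_ι_comp_eq i (hinv s) H.toFunctor (congrArg Cat.Hom.toFunctor hl))

end InvertedFin

lemma mem_wideSub_vrt_iff {m : ℕ} (k : Fin (m + 1)) {n : SimplexCategoryᵒᵖ}
    (σ : (sprod J Δ[m]).obj n) :
    σ ∈ (wideSub Δ[m] {vrt m k}).carrier n ↔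
      ∀ j, σ.1 j = true → SSet.stdSimplex.asOrderHom σ.2 j = k := by
  have map_eq_vrt_iff (g : ⦋0⦌ ⟶ n.unop) : Δ[m].map g.op σ.2 = vrt m k ↔
      SSet.stdSimplex.asOrderHom σ.2 (g.toOrderHom 0) = k := by
    refine ⟨fun h => congrArg (fun α => SSet.stdSimplex.asOrderHom α 0) h, fun h => ?_⟩
    ext x
    rw [Fin.eq_zero x]
    exact congrArg Fin.val h
  exact ⟨fun h j => (map_eq_vrt_iff _).1 ∘ h (SimplexCategory.const ⦋0⦌ n.unop j),
    fun h g hg => (map_eq_vrt_iff g).2 (h _ hg)⟩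

namespace InvertedFin

variable {m : ℕ} (i : Fin (m + 1))

lemma predAbove_succ_succAbove (k : Fin (m + 1)) : i.predAbove (i.succ.succAbove k) = k := by
  rcases le_or_gt k i with h | h
  · rw [Fin.succAbove_of_castSucc_lt _ _ (Fin.castSucc_lt_succ_iff.2 h),
      Fin.predAbove_castSucc_of_le _ _ h]
  · rw [Fin.succAbove_of_le_castSucc _ _ (Fin.succ_le_castSucc_iff.2 h),
      Fin.predAbove_succ_of_le _ _ h.le]

/-- The vertex `(1, i)` of `W_i(Δ[m])` is `i+1`, and `(0, k)` is the `k`-th element of `[m+1]`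
other than `i+1`. -/
def vertexEquiv : {p : Bool × Fin (m + 1) // p.1 = true → p.2 = i} ≃ InvertedFin i where
  toFun p := ⟨cond p.1.1 i.succ (i.succ.succAbove p.1.2)⟩
  invFun a := ⟨(decide (a.val = i.succ), i.predAbove a.val), fun h => by
    rw [of_decide_eq_true h, Fin.predAbove_succ_self]⟩
  left_inv := by
    rintro ⟨⟨_ | _, k⟩, hk⟩
    · simp [Fin.succAbove_ne, predAbove_succ_succAbove]
    · obtain rfl := hk rfl
      simp
  right_inv := by
    rintro ⟨a⟩
    by_cases h : a = i.succ
    · simp [h]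
    · simp [h, Fin.succ_succAbove_predAbove h]

lemma predAbove_vertexEquiv (p : {p : Bool × Fin (m + 1) // p.1 = true → p.2 = i}) :
    i.predAbove (vertexEquiv i p).val = p.1.2 :=
  congrArg (fun p => p.1.2) ((vertexEquiv i).left_inv p)

open SSet.stdSimplex in
def simplexEquiv (n : SimplexCategoryᵒᵖ) :
    (wideSub Δ[m] {vrt m i}).toSSet.obj n ≃ (Fin (n.unop.len + 1) →o InvertedFin i) where
  toFun σ :=
    { toFun j := vertexEquiv i ⟨(σ.1.1 j, asOrderHom σ.1.2 j),
        (mem_wideSub_vrt_iff i σ.1).1 σ.2 j⟩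
      monotone' a b h := by
        rw [le_iff, predAbove_vertexEquiv, predAbove_vertexEquiv]
        exact (asOrderHom σ.1.2).monotone h }
  invFun x := ⟨(fun j => ((vertexEquiv i).symm (x j)).1.1,
      objMk ⟨fun j => ((vertexEquiv i).symm (x j)).1.2, fun _ _ h => x.monotone h⟩),
    (mem_wideSub_vrt_iff i _).2 fun j => ((vertexEquiv i).symm (x j)).2⟩
  left_inv σ := by
    apply Subtype.ext
    apply Prod.ext
    · funext j
      exact congrArg (fun p => p.1.1) ((vertexEquiv i).symm_apply_apply _)
    · apply objEquiv.injective
      ext j : 3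
      exact congrArg (fun p => p.1.2) ((vertexEquiv i).symm_apply_apply _)
  right_inv x := OrderHom.ext _ _ <| funext fun j => (vertexEquiv i).apply_symm_apply (x j)

noncomputable def nerveIso : (wideSub Δ[m] {vrt m i}).toSSet ≅ nerve (InvertedFin i) :=
  NatIso.ofComponents (fun n => ((simplexEquiv i n).trans OrderHom.equivFunctor).toIso)
    fun _ => by ext; rfl

end InvertedFin

/-- For `n = m + 1 ≥ 1` and `0 ≤ i ≤ n − 1`, the isoplex
`∇̄_i[n] = W_i(Δ[n−1])` is isomorphic to the nerve of the category `[n]_i` obtained from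
`[n] = {0 ≤ … ≤ n}` by freely inverting `i → i+1`: that is, there is a pushout square in
`Cat` of `[n] ← [1] → 𝕀` (where `[1] → [n]` picks out `i → i+1` and `[1] → 𝕀` is the
inclusion into the free-living isomorphism) whose pushout `C` has `nerve C` isomorphic
to the isoplex. -/
theorem isoplex_iso_nerve_pushout (m : ℕ) (i : Fin (m + 1)) :
    ∃ (C : Cat.{0, 0}) (g₁ : Cat.of (Fin (m + 2)) ⟶ C) (g₂ : Cat.of FreeIso ⟶ C),
      IsPushout (edgeHom m i) inclHom g₁ g₂ ∧
      Nonempty ((wideSub Δ[m] {vrt m i}).toSSet ≅ nerve C) :=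
  ⟨Cat.of (InvertedFin i), _, _, InvertedFin.isPushout i, ⟨InvertedFin.nerveIso i⟩⟩

end Paper
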